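/- For any prime p, the subgroup of SL_2(Z[1/p]) generated by the matrices A = [[1,0],[1,1]] and Q = [[1,1/p],[0,1]] equals all of SL_2(Z[1/p]). -/

import Mathlib

abbrev SL2Q := Matrix.SpecialLinearGroup (Fin 2) ℚ

/-- A = [[1,0],[1,1]] -/
def matA : SL2Q := ⟨!![1,0;1,1], by norm_num [Matrix.det_fin_two_of]⟩
/-- B = [[0,1],[-1,0]] -/
def matB : SL2Q := ⟨!![0,1;-1,0], by norm_num [Matrix.det_fin_two_of]⟩
/-- Q_q = [[1,q],[0,1]] -/
def matQ (q : ℚ) : SL2Q := ⟨!![1,q;0,1], by norm_num [Matrix.det_fin_two_of]⟩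
/-- U_p = [[p,0],[0,1/p]] -/
def matU (p : ℚ) (hp : p ≠ 0) : SL2Q := ⟨!![p,0;0,p⁻¹], by rw [Matrix.det_fin_two_of]; field_simp; simp⟩
/-- lower unipotent [[1,0],[x,1]] -/
def matL (x : ℚ) : SL2Q := ⟨!![1,0;x,1], by norm_num [Matrix.det_fin_two_of]⟩

/-!
Both generators have entries in `ℤ[1/p]`, which gives one inclusion. Conversely, `Q(1) = Q(1/p)^p`,
the Weyl element `B = Q(1) A⁻¹ Q(1)` conjugates `Q(x)` to `L(-x)`, and Whitehead's identity
`diag(a, a⁻¹) B = Q(a) L(-a⁻¹) Q(a)` puts `diag(1/p, p)` into the group. Conjugation by it divides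
the corner of `Q(x)` by `p²`, so all elementary matrices over `ℤ[1/p]` lie in the group. Finally
`ℤ[1/p]` is Euclidean for `x ↦ |num x|`: row reduction with `Q(t)` and `B` brings any matrix of
`SL₂(ℤ[1/p])` to the triangular form `diag(a, a⁻¹) Q(b)`.
-/

namespace Matrix.SpecialLinearGroup

variable {n K : Type*} [Fintype n] [DecidableEq n] [CommRing K]

theorem mem_range_map_subtype_iff {R : Subring K} {M : SpecialLinearGroup n K} :
    M ∈ (map R.subtype).range ↔ ∀ i j, M i j ∈ R := by
  constructor
  · rintro ⟨N, rfl⟩ i j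
    exact (N i j).2
  · intro hM
    refine ⟨⟨Matrix.of fun i j => ⟨M i j, hM i j⟩, Subtype.ext ?_⟩, Subtype.ext rfl⟩
    rw [Subring.coe_one, ← Subring.coe_subtype, RingHom.map_det]
    exact M.2

end Matrix.SpecialLinearGroup

open Matrix.SpecialLinearGroup

@[simp] theorem coe_matA : (matA : Matrix (Fin 2) (Fin 2) ℚ) = !![1, 0; 1, 1] := rfl
@[simp] theorem coe_matB : (matB : Matrix (Fin 2) (Fin 2) ℚ) = !![0, 1; -1, 0] := rfl
@[simp] theorem coe_matQ (x : ℚ) : (matQ x : Matrix (Fin 2) (Fin 2) ℚ) = !![1, x; 0, 1] := rfl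
@[simp] theorem coe_matL (x : ℚ) : (matL x : Matrix (Fin 2) (Fin 2) ℚ) = !![1, 0; x, 1] := rfl
@[simp] theorem coe_matU {a : ℚ} (ha : a ≠ 0) :
    (matU a ha : Matrix (Fin 2) (Fin 2) ℚ) = !![a, 0; 0, a⁻¹] := rfl

theorem matQ_mul (x y : ℚ) : matQ x * matQ y = matQ (x + y) := by
  ext : 1; simp [add_comm]

theorem matQ_zero : matQ 0 = 1 := by
  ext : 1; simp [Matrix.one_fin_two]

theorem matQ_zpow (x : ℚ) (n : ℤ) : matQ x ^ n = matQ (n * x) := by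
  induction n using Int.induction_on with
  | zero => simp [matQ_zero]
  | succ n ih => rw [zpow_add_one, ih, matQ_mul]; push_cast; ring_nf
  | pred n ih =>
    rw [zpow_sub_one, ih, mul_inv_eq_iff_eq_mul, matQ_mul]; push_cast; ring_nf

theorem matA_eq_matL : matA = matL 1 := by
  ext : 1; simp

theorem matA_inv : matA⁻¹ = matL (-1) := by
  ext : 1; simp [coe_inv, Matrix.adjugate_fin_two_of]

theorem matB_eq : matB = matQ 1 * matL (-1) * matQ 1 := by
  ext : 1; simp

theorem matB_mul_matQ_mul_inv (x : ℚ) : matB * matQ x * matB⁻¹ = matL (-x) := by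
  ext : 1; simp [coe_inv, Matrix.adjugate_fin_two_of]

theorem matU_mul_matB {a : ℚ} (ha : a ≠ 0) :
    matU a ha * matB = matQ a * matL (-a⁻¹) * matQ a := by
  ext : 1; simp [ha]

theorem matU_mul_matQ_mul_inv {a : ℚ} (ha : a ≠ 0) (x : ℚ) :
    matU a ha * matQ x * (matU a ha)⁻¹ = matQ (a ^ 2 * x) := by
  ext : 1; simp [coe_inv, Matrix.adjugate_fin_two_of, ha]
  ring_nf

theorem mul_eq_one_of_apply_one_zero_eq_zero {M : SL2Q} (hM : M 1 0 = 0) : M 0 0 * M 1 1 = 1 := by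
  have := M.2
  rwa [Matrix.det_fin_two, hM, mul_zero, sub_zero] at this

theorem eq_matU_mul_matQ {M : SL2Q} (hM : M 1 0 = 0) (ha : M 0 0 ≠ 0) :
    M = matU (M 0 0) ha * matQ (M 0 1 * M 1 1) := by
  have hdet := mul_eq_one_of_apply_one_zero_eq_zero hM
  ext i j
  fin_cases i <;> fin_cases j <;> simp [hM]
  · linear_combination (-M 0 1) * hdet
  · exact eq_inv_of_mul_eq_one_right hdet

/-- `ℤ[1/p]` as a subring of `ℚ`. -/
def intAway (p : ℕ) (hp : (p : ℚ) ≠ 0) : Subring ℚ where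
  carrier := {x | ∃ a : ℤ, ∃ n : ℕ, x = a / (p : ℚ) ^ n}
  mul_mem' := by
    rintro _ _ ⟨a, n, rfl⟩ ⟨b, m, rfl⟩
    exact ⟨a * b, n + m, by push_cast; rw [pow_add, mul_div_mul_comm]⟩
  one_mem' := ⟨1, 0, by simp⟩
  add_mem' := by
    rintro _ _ ⟨a, n, rfl⟩ ⟨b, m, rfl⟩
    refine ⟨a * p ^ m + b * p ^ n, n + m, ?_⟩
    push_cast
    field_simp
    ring
  zero_mem' := ⟨0, 0, by simp⟩
  neg_mem' := by
    rintro _ ⟨a, n, rfl⟩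
    exact ⟨-a, n, by push_cast; ring⟩

theorem intAway.exists_natAbs_num_lt {p : ℕ} {hp : (p : ℚ) ≠ 0} {a : ℚ} (ha : a ∈ intAway p hp)
    {c : ℚ} (hc : c ≠ 0) : ∃ t ∈ intAway p hp, (a + t * c).num.natAbs < c.num.natAbs := by
  obtain ⟨u, s, rfl⟩ := ha
  have hm : c.num ≠ 0 := Rat.num_ne_zero.mpr hc
  -- This `t` makes `a + t * c = (u % num c) / p ^ s`.
  refine ⟨(-(u / c.num) * c.den : ℤ) / (p : ℚ) ^ s, ⟨_, s, rfl⟩, ?_⟩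
  have hrem : u / (p : ℚ) ^ s + (-(u / c.num) * c.den : ℤ) / (p : ℚ) ^ s * c
      = (u % c.num : ℤ) / ((p ^ s : ℕ) : ℤ) := by
    rw [Int.emod_def]
    push_cast
    rw [← Rat.mul_den_eq_num c]
    ring
  have hps : ((p ^ s : ℕ) : ℤ) ≠ 0 := by exact_mod_cast pow_ne_zero s (by exact_mod_cast hp)
  rw [hrem, ← Rat.divInt_eq_div]
  calc (Rat.divInt (u % c.num) ((p ^ s : ℕ) : ℤ)).num.natAbs ≤ (u % c.num).natAbs := by
        by_cases h0 : u % c.num = 0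
        · simp [h0]
        · exact Int.natAbs_le_of_dvd_ne_zero (Rat.num_dvd _ hps) h0
    _ < c.num.natAbs := by
        have := Int.emod_lt_abs u hm
        zify
        rwa [abs_of_nonneg (Int.emod_nonneg u hm)]

section Euclidean

variable {R : Subring ℚ} {G : Subgroup SL2Q}

theorem matQ_mem_range {x : ℚ} (hx : x ∈ R) : matQ x ∈ (map R.subtype).range := by
  rw [mem_range_map_subtype_iff]
  intro i j
  fin_cases i <;> fin_cases j <;> simp [hx, R.zero_mem, R.one_mem]

theorem matL_mem_range {x : ℚ} (hx : x ∈ R) : matL x ∈ (map R.subtype).range := by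
  rw [mem_range_map_subtype_iff]
  intro i j
  fin_cases i <;> fin_cases j <;> simp [hx, R.zero_mem, R.one_mem]

theorem matB_mem_range : matB ∈ (map R.subtype).range := by
  rw [mem_range_map_subtype_iff]
  intro i j
  fin_cases i <;> fin_cases j <;> simp [R.zero_mem, R.one_mem, R.neg_mem]

theorem matB_mem_of_forall_matQ_matL_mem (hQ : ∀ x ∈ R, matQ x ∈ G) (hL : ∀ x ∈ R, matL x ∈ G) :
    matB ∈ G := by
  rw [matB_eq]
  exact mul_mem (mul_mem (hQ 1 R.one_mem) (hL _ (R.neg_mem R.one_mem))) (hQ 1 R.one_mem)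

theorem mem_of_apply_one_zero_eq_zero (hQ : ∀ x ∈ R, matQ x ∈ G)
    (hL : ∀ x ∈ R, matL x ∈ G) {M : SL2Q} (hMR : M ∈ (map R.subtype).range)
    (hM : M 1 0 = 0) : M ∈ G := by
  rw [mem_range_map_subtype_iff] at hMR
  have hdet := mul_eq_one_of_apply_one_zero_eq_zero hM
  have ha : M 0 0 ≠ 0 := left_ne_zero_of_mul_eq_one hdet
  have hinv : (M 0 0)⁻¹ ∈ R := by
    rw [← eq_inv_of_mul_eq_one_right hdet]
    exact hMR 1 1
  have hU : matU (M 0 0) ha ∈ G := by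
    rw [eq_mul_inv_of_mul_eq (matU_mul_matB ha)]
    exact mul_mem (mul_mem (mul_mem (hQ _ (hMR 0 0)) (hL _ (R.neg_mem hinv))) (hQ _ (hMR 0 0)))
      (inv_mem (matB_mem_of_forall_matQ_matL_mem hQ hL))
  rw [eq_matU_mul_matQ hM ha]
  exact mul_mem hU (hQ _ (R.mul_mem (hMR 0 1) (hMR 1 1)))

theorem range_map_subtype_le_of_euclidean (f : ℚ → ℕ)
    (hf : ∀ a ∈ R, ∀ c ∈ R, c ≠ 0 → ∃ t ∈ R, f (a + t * c) < f c)
    (hQ : ∀ x ∈ R, matQ x ∈ G) (hL : ∀ x ∈ R, matL x ∈ G) : (map R.subtype).range ≤ G := by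
  intro M hMR
  induction hk : f (M 1 0) using Nat.strong_induction_on generalizing M with
  | _ k ih =>
  by_cases hM : M 1 0 = 0
  · exact mem_of_apply_one_zero_eq_zero hQ hL hMR hM
  obtain ⟨t, ht, hlt⟩ := hf _ (mem_range_map_subtype_iff.1 hMR 0 0) _
    (mem_range_map_subtype_iff.1 hMR 1 0) hM
  -- Left multiplication by `B⁻¹ Q(t)` puts the row `(a + t c, b + t d)` at the bottom.
  set E := matB⁻¹ * matQ t
  have hE : (E * M) 1 0 = M 0 0 + t * M 1 0 := by
    simp [E, coe_inv, Matrix.adjugate_fin_two_of, Matrix.mul_apply, Fin.sum_univ_two]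
  rw [← inv_mul_cancel_left E M]
  refine mul_mem (inv_mem (mul_mem (inv_mem (matB_mem_of_forall_matQ_matL_mem hQ hL)) (hQ t ht)))
    (ih _ (hk ▸ hE ▸ hlt) ?_ rfl)
  exact mul_mem (mul_mem (inv_mem matB_mem_range) (matQ_mem_range ht)) hMR

end Euclidean

section Generators

variable {p : ℕ} {G : Subgroup SL2Q}

theorem matQ_intCast_mem (hp : (p : ℚ) ≠ 0) (hQp : matQ (1 / p) ∈ G) (n : ℤ) :
    matQ n ∈ G := by
  have hQ1 : matQ 1 = matQ (1 / p) ^ (p : ℤ) := by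
    rw [matQ_zpow, Int.cast_natCast, mul_one_div_cancel hp]
  have h := zpow_mem (zpow_mem hQp (p : ℤ)) n
  rwa [← hQ1, matQ_zpow, mul_one] at h

theorem matB_mem (hp : (p : ℚ) ≠ 0) (hA : matA ∈ G) (hQp : matQ (1 / p) ∈ G) : matB ∈ G := by
  rw [matB_eq, ← matA_inv]
  have hQ1 := matQ_intCast_mem hp hQp 1
  rw [Int.cast_one] at hQ1
  exact mul_mem (mul_mem hQ1 (inv_mem hA)) hQ1

theorem matL_neg_mem (hB : matB ∈ G) {x : ℚ} (hx : matQ x ∈ G) : matL (-x) ∈ G := by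
  rw [← matB_mul_matQ_mul_inv]
  exact mul_mem (mul_mem hB hx) (inv_mem hB)

theorem matQ_one_div_pow_mem (hp : (p : ℚ) ≠ 0) (hA : matA ∈ G) (hQp : matQ (1 / p) ∈ G)
    (n : ℕ) : matQ (1 / (p : ℚ) ^ n) ∈ G := by
  have hB := matB_mem hp hA hQp
  have hU : matU (p : ℚ)⁻¹ (inv_ne_zero hp) ∈ G := by
    rw [eq_mul_inv_of_mul_eq (matU_mul_matB _), inv_inv, ← one_div]
    refine mul_mem (mul_mem (mul_mem hQp (matL_neg_mem hB ?_)) hQp) (inv_mem hB)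
    exact_mod_cast matQ_intCast_mem hp hQp p
  induction n using Nat.twoStepInduction with
  | zero => simpa using matQ_intCast_mem hp hQp 1
  | one => simpa using hQp
  | more n ih _ =>
    have h := mul_mem (mul_mem hU ih) (inv_mem hU)
    rwa [matU_mul_matQ_mul_inv, ← one_div, div_pow, one_pow, one_div_mul_one_div, ← pow_add,
      add_comm] at h

theorem matQ_mem_of_mem_intAway (hp : (p : ℚ) ≠ 0) (hA : matA ∈ G) (hQp : matQ (1 / p) ∈ G)
    {x : ℚ} (hx : x ∈ intAway p hp) : matQ x ∈ G := by
  obtain ⟨a, n, rfl⟩ := hx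
  have h := zpow_mem (matQ_one_div_pow_mem hp hA hQp n) a
  rwa [matQ_zpow, mul_one_div] at h

theorem matL_mem_of_mem_intAway (hp : (p : ℚ) ≠ 0) (hA : matA ∈ G) (hQp : matQ (1 / p) ∈ G)
    {x : ℚ} (hx : x ∈ intAway p hp) : matL x ∈ G := by
  simpa using matL_neg_mem (matB_mem hp hA hQp)
    (matQ_mem_of_mem_intAway hp hA hQp ((intAway p hp).neg_mem hx))

end Generators

theorem closure_matA_matQ_eq (p : ℕ) (hp : (p : ℚ) ≠ 0) :
    Subgroup.closure {matA, matQ (1 / p)} = (map (intAway p hp).subtype).range := by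
  set G := Subgroup.closure {matA, matQ (1 / (p : ℚ))}
  have hA : matA ∈ G := Subgroup.subset_closure (Set.mem_insert _ _)
  have hQp : matQ (1 / p) ∈ G := Subgroup.subset_closure (Set.mem_insert_of_mem _ rfl)
  refine le_antisymm ?_ ?_
  · rw [Subgroup.closure_le, Set.insert_subset_iff, Set.singleton_subset_iff]
    refine ⟨?_, matQ_mem_range ⟨1, 1, by simp⟩⟩
    rw [matA_eq_matL]
    exact matL_mem_range (intAway p hp).one_mem
  · exact range_map_subtype_le_of_euclidean (fun x => x.num.natAbs)
      (fun a ha c _ hc => intAway.exists_natAbs_num_lt ha hc)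
      (fun x hx => matQ_mem_of_mem_intAway hp hA hQp hx)
      (fun x hx => matL_mem_of_mem_intAway hp hA hQp hx)

theorem stmt3 (p : ℕ) (hp : p.Prime) :
    ∀ M : SL2Q, M ∈ Subgroup.closure {matA, matQ (1/p)} ↔
      (∀ i j, ∃ a : ℤ, ∃ n : ℕ, (M : Matrix (Fin 2) (Fin 2) ℚ) i j = (a : ℚ) / (p:ℚ)^n) := by
  intro M
  rw [closure_matA_matQ_eq p (by exact_mod_cast hp.ne_zero), mem_range_map_subtype_iff]
  rfl
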